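/- Let R be a complete DVR with uniformizer π, Γ an abstract group, and V a finitely generated free R-module with an R-linear Γ-action. If v ∈ V is such that for every n ≥ 0, the submodule R·v̄ ⊆ V/π^{n+1}V spanned by the reduction v̄ of v is Γ-stable, then R·v ⊆ V is Γ-stable. -/

import Mathlib

/-!
By Krull's intersection theorem, a finitely generated module `M/N` over a Noetherian ring
has no nonzero element divisible by every power of an ideal inside the Jacobson radical.
Hence every submodule `N` is closed in the `I`-adic topology: `⋂ₙ (N + IⁿM) = N`.
For `N = R·v` and `I = (π)` over a DVR, the hypothesis places `ρ γ (v)` in every `N + πⁿ⁺¹V`.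
-/

open Submodule in
theorem Submodule.iInf_sup_pow_smul_top_eq {R M : Type*} [CommRing R] [IsNoetherianRing R]
    [AddCommGroup M] [Module R M] [Module.Finite R M] {I : Ideal R}
    (hI : I ≤ Ideal.jacobson ⊥) (N : Submodule R M) :
    ⨅ n : ℕ, N ⊔ I ^ n • ⊤ = N := by
  have hcomap : ∀ n : ℕ, N ⊔ I ^ n • ⊤ = comap N.mkQ (I ^ n • ⊤) := fun n => by
    rw [← comap_map_mkQ, map_smul'', map_top, range_mkQ]
  simp_rw [hcomap, ← comap_iInf, Ideal.iInf_pow_smul_eq_bot_of_le_jacobson I hI, comap_bot,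
    ker_mkQ]

theorem LinearMap.range_smul_id {R M : Type*} [CommRing R] [AddCommGroup M] [Module R M] (r : R) :
    LinearMap.range (r • LinearMap.id : M →ₗ[R] M) = Ideal.span {r} • ⊤ := by
  ext x
  simp [Submodule.ideal_span_singleton_smul, Submodule.mem_smul_pointwise_iff_exists]

theorem stmt10 {R : Type} [CommRing R] [IsDomain R] [IsDiscreteValuationRing R]
    (π : R) (hπ : Irreducible π)
    (Γ : Type) [Group Γ]
    (V : Type) [AddCommGroup V] [Module R V] [Module.Finite R V]
    (ρ : Representation R Γ V) (v : V)
    (h : ∀ (n : ℕ) (γ : Γ),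
      Submodule.map (ρ γ)
          (Submodule.span R {v} ⊔
            LinearMap.range ((π ^ (n + 1)) • (LinearMap.id : V →ₗ[R] V))) ≤
        Submodule.span R {v} ⊔
          LinearMap.range ((π ^ (n + 1)) • (LinearMap.id : V →ₗ[R] V))) :
    ∀ γ : Γ, Submodule.map (ρ γ) (Submodule.span R {v}) ≤ Submodule.span R {v} := by
  set N := Submodule.span R {v}
  set I := Ideal.span {π}
  have hI : I ≤ Ideal.jacobson ⊥ :=
    (IsLocalRing.le_maximalIdeal (Ideal.span_singleton_eq_top.not.mpr hπ.not_isUnit)).trans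
      (IsLocalRing.maximalIdeal_le_jacobson ⊥)
  have hN : ∀ n : ℕ, N ⊔ LinearMap.range ((π ^ (n + 1)) • LinearMap.id) ≤ N ⊔ I ^ n • ⊤ :=
    fun n => by
      rw [LinearMap.range_smul_id, ← Ideal.span_singleton_pow]
      exact sup_le_sup_left (Submodule.smul_mono_left (Ideal.pow_le_pow_right n.le_succ)) _
  intro γ
  calc N.map (ρ γ) ≤ ⨅ n : ℕ, N ⊔ I ^ n • ⊤ :=
        le_iInf fun n => ((Submodule.map_mono le_sup_left).trans (h n γ)).trans (hN n)
    _ = N := Submodule.iInf_sup_pow_smul_top_eq hI N
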